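/- There is an absolute constant c > 0 (independent of G, n, s, and α) such that for every integer i ≥ 0, if n ≥ 2 then ∑_{v∈V} ( ∑_{u ∈ Γ⁺_i(v)} d_u^{s−1} )^2 ≤ c · 2^s · α^{1/s} · μ^{2 − 1/s} · log₂ n. -/

import Mathlib

open Finset

/-! Write `T = 2^i`, `t = |U_i|`, `M = ∑_{u ∈ U_i} d_u^s` and `S_v = ∑_{u ∈ Γ⁺_i(v)} d_u^{s-1}`.
Since all degrees in `U_i` lie in `(T/2, T]`, we have `S_v ≤ T^{s-1} |Γ⁺_i(v)|` and `t T^s ≤ 2^s M`;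
double counting gives `∑_v S_v ≤ M`. Call `v` heavy if `|Γ⁺_i(v)| > 2α`. The pairs `(v, u)` with
`v` heavy and `u ∈ Γ⁺_i(v)` are distinct edges inside `heavy ∪ U_i`, so degeneracy bounds their
number by `α (|heavy| + t)`, hence by `2αt`; and `|Γ⁺_i(v)| ≤ d_v ≤ T` because `≺` refines the
degree order. So on light vertices `|Γ⁺_i(v)| ≤ m := min(2α, t)`, on heavy ones
`|Γ⁺_i(v)| ≤ m := min(T, t)`, and in both classes `∑ S_v² ≤ T^{s-1} m ∑ S_v` with
`m ∑ S_v ≤ 2^{s+1} α M`; taking `s`-th powers turns this into `2^{s+1} α^{1/s} M^{2-1/s}`. -/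

lemma le_mul_rpow_of_pow_le {s : ℕ} (hs : s ≠ 0) {X C a M : ℝ} (hC : 0 ≤ C)
    (ha : 0 ≤ a) (hM : 0 ≤ M) (h : X ^ s ≤ C ^ s * a * M ^ (2 * s - 1)) :
    X ≤ C * a ^ ((1 : ℝ) / s) * M ^ ((2 : ℝ) - 1 / s) := by
  have hs' : (s : ℝ) ≠ 0 := Nat.cast_ne_zero.mpr hs
  refine le_of_pow_le_pow_left₀ hs (by positivity) (h.trans_eq ?_)
  rw [mul_pow, mul_pow, ← Real.rpow_natCast (a ^ _), ← Real.rpow_mul ha,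
    ← Real.rpow_natCast (M ^ _), ← Real.rpow_mul hM, ← Real.rpow_natCast M,
    one_div_mul_cancel hs', Real.rpow_one, Nat.cast_sub (by omega), sub_mul,
    one_div_mul_cancel hs']
  push_cast
  ring_nf

lemma pow_mul_mul_pow_succ_le (k : ℕ) {T t m Y M K : ℝ} (hT : 0 ≤ T) (hm : 0 ≤ m) (hY : 0 ≤ Y)
    (hmt : m ≤ t) (hYM : Y ≤ M) (hlevel : t * T ^ (k + 1) ≤ 2 ^ (k + 1) * M)
    (hmY : m * Y ≤ K * M) :
    (T ^ k * m * Y) ^ (k + 1) ≤ (2 ^ (k + 1)) ^ k * K * M ^ (2 * k + 1) := by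
  have hbase : T ^ (k + 1) * m * Y ≤ 2 ^ (k + 1) * M * M :=
    calc T ^ (k + 1) * m * Y ≤ t * T ^ (k + 1) * M := by
          rw [mul_comm t]
          have := hm.trans hmt
          gcongr
      _ ≤ 2 ^ (k + 1) * M * M := by gcongr; exact hY.trans hYM
  calc (T ^ k * m * Y) ^ (k + 1) = (T ^ (k + 1) * m * Y) ^ k * (m * Y) := by ring
    _ ≤ (2 ^ (k + 1) * M * M) ^ k * (K * M) := by
      have hM : 0 ≤ M := hY.trans hYM
      gcongr
    _ = (2 ^ (k + 1)) ^ k * K * M ^ (2 * k + 1) := by ring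

theorem sum_sq_le_two_pow_mul_rpow {ι : Type*} (P : Finset ι) (S : ι → ℝ) {s : ℕ} (hs : 1 ≤ s)
    {T t m M α : ℝ} (hT : 0 ≤ T) (hm : 0 ≤ m) (hα : 0 ≤ α) (hmt : m ≤ t)
    (hS : ∀ v ∈ P, 0 ≤ S v ∧ S v ≤ T ^ (s - 1) * m) (hSM : ∑ v ∈ P, S v ≤ M)
    (hlevel : t * T ^ s ≤ 2 ^ s * M) (hmS : m * ∑ v ∈ P, S v ≤ 2 ^ (s + 1) * α * M) :
    ∑ v ∈ P, S v ^ 2 ≤ 2 ^ (s + 1) * α ^ ((1 : ℝ) / s) * M ^ ((2 : ℝ) - 1 / s) := by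
  obtain ⟨k, rfl⟩ := Nat.exists_eq_add_of_le' hs
  have hY : 0 ≤ ∑ v ∈ P, S v := sum_nonneg fun v hv => (hS v hv).1
  have hM : 0 ≤ M := hY.trans hSM
  have hsq : ∑ v ∈ P, S v ^ 2 ≤ T ^ k * m * ∑ v ∈ P, S v := by
    rw [mul_sum]
    exact sum_le_sum fun v hv => by
      rw [sq]; exact mul_le_mul_of_nonneg_right (hS v hv).2 (hS v hv).1
  refine le_mul_rpow_of_pow_le (by omega) (by positivity) hα hM ?_
  calc (∑ v ∈ P, S v ^ 2) ^ (k + 1) ≤ (T ^ k * m * ∑ v ∈ P, S v) ^ (k + 1) := by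
        gcongr
    _ ≤ (2 ^ (k + 1)) ^ k * (2 ^ (k + 2) * α) * M ^ (2 * k + 1) :=
      pow_mul_mul_pow_succ_le k hT hm hY hmt hSM hlevel hmS
    _ ≤ (2 ^ (k + 2)) ^ (k + 1) * α * M ^ (2 * (k + 1) - 1) := by
      rw [show 2 * (k + 1) - 1 = 2 * k + 1 by omega, ← mul_assoc, ← pow_mul, ← pow_mul,
        ← pow_add]
      gcongr
      · norm_num
      · nlinarith

lemma card_mul_pow_le_two_pow_mul_sum_pow {ι : Type*} {U : Finset ι} {f : ι → ℝ} {T : ℝ}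
    (hT : 0 ≤ T) (hU : ∀ u ∈ U, T ≤ 2 * f u) (s : ℕ) :
    #U * T ^ s ≤ 2 ^ s * ∑ u ∈ U, f u ^ s := by
  rw [← nsmul_eq_mul, ← sum_const, mul_sum]
  exact sum_le_sum fun u hu => by rw [← mul_pow]; gcongr; exact hU u hu

namespace SimpleGraph

variable {V : Type*} [Fintype V] (G : SimpleGraph V) [DecidableRel G.Adj]
  (prec : V → V → Prop) [DecidableRel prec]

def upNeighborFinset (v : V) : Finset V := (G.neighborFinset v).filter (prec v)

variable {G prec}

@[simp]
lemma mem_upNeighborFinset {u v : V} :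
    u ∈ G.upNeighborFinset prec v ↔ G.Adj v u ∧ prec v u := by
  simp [upNeighborFinset]

lemma degree_le_of_mem_upNeighborFinset [IsStrictOrder V prec]
    (hmono : ∀ u v, G.degree u < G.degree v → prec u v) {u v : V}
    (h : u ∈ G.upNeighborFinset prec v) : G.degree v ≤ G.degree u :=
  not_lt.1 fun hlt => irrefl v (_root_.trans (mem_upNeighborFinset.1 h).2 (hmono u v hlt))

lemma upNeighborFinset_subset (v : V) : G.upNeighborFinset prec v ⊆ G.neighborFinset v :=
  filter_subset _ _

variable [DecidableEq V]

lemma card_upNeighborFinset_inter_le_degree (U : Finset V) (v : V) :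
    #(G.upNeighborFinset prec v ∩ U) ≤ G.degree v := by
  rw [← card_neighborFinset_eq_degree]
  exact card_le_card (inter_subset_left.trans (upNeighborFinset_subset v))

lemma sum_card_upNeighborFinset_inter_le [Std.Asymm prec] (B U : Finset V) :
    ∑ v ∈ B, #(G.upNeighborFinset prec v ∩ U) ≤
      #(G.edgeFinset.filter fun e => ∀ x ∈ e, x ∈ B ∪ U) := by
  rw [← card_sigma]
  refine card_le_card_of_injOn (fun p => s(p.1, p.2)) ?_ ?_
  · rintro ⟨v, u⟩ h
    simp only [coe_sigma, Set.mem_sigma_iff, mem_coe, mem_inter, mem_upNeighborFinset] at h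
    simp only [coe_filter, Set.mem_ofPred_eq, mem_edgeFinset, mem_edgeSet, Sym2.mem_iff,
      forall_eq_or_imp, forall_eq, mem_union]
    exact ⟨h.2.1.1, Or.inl h.1, Or.inr h.2.2⟩
  · rintro ⟨v, u⟩ h ⟨v', u'⟩ h' heq
    simp only [coe_sigma, Set.mem_sigma_iff, mem_coe, mem_inter, mem_upNeighborFinset] at h h'
    rcases Sym2.eq_iff.1 heq with ⟨rfl, rfl⟩ | ⟨rfl, rfl⟩
    · rfl
    · exact (asymm h.2.1.2 h'.2.1.2).elim

lemma sum_sum_upNeighborFinset_inter_le (U : Finset V) {f : V → ℝ} (hf : ∀ u, 0 ≤ f u) :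
    ∑ v, ∑ u ∈ G.upNeighborFinset prec v ∩ U, f u ≤ ∑ u ∈ U, G.degree u * f u :=
  calc ∑ v, ∑ u ∈ G.upNeighborFinset prec v ∩ U, f u
      ≤ ∑ v, ∑ u ∈ G.neighborFinset v ∩ U, f u := by
        gcongr with v
        · exact fun u _ _ => hf u
        · apply upNeighborFinset_subset
    _ = ∑ u ∈ U, ∑ v ∈ G.neighborFinset u, f u :=
        sum_comm' fun v u => by simp [mem_neighborFinset, G.adj_comm, and_comm]
    _ = ∑ u ∈ U, G.degree u * f u := by simp [card_neighborFinset_eq_degree]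

lemma sum_card_upNeighborFinset_inter_heavy_le [Std.Asymm prec] {α : ℝ} (hα : 0 ≤ α)
    (hsparse : ∀ S : Finset V, (#(G.edgeFinset.filter fun e => ∀ x ∈ e, x ∈ S) : ℝ) ≤ α * #S)
    (U : Finset V) :
    ∑ v ∈ univ.filter (fun v => 2 * α < #(G.upNeighborFinset prec v ∩ U)),
      (#(G.upNeighborFinset prec v ∩ U) : ℝ) ≤ 2 * α * #U := by
  set B := univ.filter (fun v => 2 * α < #(G.upNeighborFinset prec v ∩ U))
  have hedges : ∑ v ∈ B, (#(G.upNeighborFinset prec v ∩ U) : ℝ) ≤ α * #B + α * #U :=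
    calc _ ≤ (#(G.edgeFinset.filter fun e => ∀ x ∈ e, x ∈ B ∪ U) : ℝ) := by
          exact_mod_cast sum_card_upNeighborFinset_inter_le B U
      _ ≤ α * #(B ∪ U) := hsparse _
      _ ≤ α * #B + α * #U := by
          rw [← mul_add]; gcongr; exact_mod_cast card_union_le B U
  have hheavy : 2 * α * #B ≤ ∑ v ∈ B, (#(G.upNeighborFinset prec v ∩ U) : ℝ) := by
    rw [mul_comm, ← nsmul_eq_mul]
    exact card_nsmul_le_sum _ _ _ fun v hv => (mem_filter.1 hv).2.le
  linarith

lemma sum_upNeighborFinset_inter_pow_le {U : Finset V} {T : ℝ}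
    (hU : ∀ u ∈ U, (G.degree u : ℝ) ≤ T) (k : ℕ) (v : V) :
    ∑ u ∈ G.upNeighborFinset prec v ∩ U, (G.degree u : ℝ) ^ k ≤
      T ^ k * #(G.upNeighborFinset prec v ∩ U) := by
  rw [mul_comm, ← nsmul_eq_mul]
  exact sum_le_card_nsmul _ _ _ fun u hu => by gcongr; exact hU u (mem_inter.1 hu).2

lemma card_upNeighborFinset_inter_le [IsStrictOrder V prec]
    (hmono : ∀ u v, G.degree u < G.degree v → prec u v) {U : Finset V} {T : ℝ} (hT : 0 ≤ T)
    (hU : ∀ u ∈ U, (G.degree u : ℝ) ≤ T) (v : V) :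
    (#(G.upNeighborFinset prec v ∩ U) : ℝ) ≤ T := by
  obtain h | ⟨u, hu⟩ := (G.upNeighborFinset prec v ∩ U).eq_empty_or_nonempty
  · simp [h, hT]
  obtain ⟨hup, huU⟩ := mem_inter.1 hu
  calc (#(G.upNeighborFinset prec v ∩ U) : ℝ) ≤ G.degree v := by
        exact_mod_cast card_upNeighborFinset_inter_le_degree U v
    _ ≤ G.degree u := by exact_mod_cast degree_le_of_mem_upNeighborFinset hmono hup
    _ ≤ T := hU u huU

theorem sum_sq_sum_upNeighborFinset_inter_le [IsStrictOrder V prec]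
    (hmono : ∀ u v, G.degree u < G.degree v → prec u v) {α : ℝ} (hα : 0 ≤ α)
    (hsparse : ∀ S : Finset V, (#(G.edgeFinset.filter fun e => ∀ x ∈ e, x ∈ S) : ℝ) ≤ α * #S)
    {s : ℕ} (hs : 1 ≤ s) {U : Finset V} {T : ℝ} (hT : 0 ≤ T)
    (hU : ∀ u ∈ U, T ≤ 2 * G.degree u ∧ (G.degree u : ℝ) ≤ T) :
    ∑ v, (∑ u ∈ G.upNeighborFinset prec v ∩ U, (G.degree u : ℝ) ^ (s - 1)) ^ 2 ≤
      4 * 2 ^ s * α ^ ((1 : ℝ) / s) * (∑ u ∈ U, (G.degree u : ℝ) ^ s) ^ ((2 : ℝ) - 1 / s) := by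
  set A := fun v => G.upNeighborFinset prec v ∩ U
  set S := fun v => ∑ u ∈ A v, (G.degree u : ℝ) ^ (s - 1)
  set M := ∑ u ∈ U, (G.degree u : ℝ) ^ s
  have hS : ∀ v, 0 ≤ S v ∧ S v ≤ T ^ (s - 1) * #(A v) := fun v =>
    ⟨by positivity, sum_upNeighborFinset_inter_pow_le (fun u hu => (hU u hu).2) _ v⟩
  have hcard : ∀ v, (#(A v) : ℝ) ≤ T ∧ (#(A v) : ℝ) ≤ #U := fun v =>
    ⟨card_upNeighborFinset_inter_le hmono hT (fun u hu => (hU u hu).2) v,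
      by exact_mod_cast card_le_card inter_subset_right⟩
  have hSM : ∑ v, S v ≤ M :=
    (sum_sum_upNeighborFinset_inter_le U fun u => by positivity).trans_eq <|
      sum_congr rfl fun u _ => mul_pow_sub_one (by omega) _
  have hlevel : #U * T ^ s ≤ 2 ^ s * M :=
    card_mul_pow_le_two_pow_mul_sum_pow hT (fun u hu => (hU u hu).1) s
  have hpart : ∀ P : Finset V, ∑ v ∈ P, S v ≤ M := fun P =>
    (sum_le_univ_sum_of_nonneg fun v => (hS v).1).trans hSM
  rw [← sum_filter_add_sum_filter_not univ (fun v => 2 * α < #(A v)),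
    show (4 : ℝ) * 2 ^ s = 2 ^ (s + 1) + 2 ^ (s + 1) by ring, add_mul, add_mul]
  refine add_le_add ?heavy ?light
  case heavy =>
    have hheavy :
        ∑ v ∈ univ.filter (fun v => 2 * α < #(A v)), S v ≤ T ^ (s - 1) * (2 * α * #U) :=
      calc _ ≤ ∑ v ∈ univ.filter (fun v => 2 * α < #(A v)), T ^ (s - 1) * #(A v) :=
            sum_le_sum fun v _ => (hS v).2
        _ ≤ T ^ (s - 1) * (2 * α * #U) := by
            rw [← mul_sum]
            gcongr
            exact sum_card_upNeighborFinset_inter_heavy_le hα hsparse U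
    refine sum_sq_le_two_pow_mul_rpow _ S hs (m := min T #U) hT (le_min hT (Nat.cast_nonneg _))
      hα (min_le_right _ _)
      (fun v _ => ⟨(hS v).1, (hS v).2.trans (by gcongr; exact le_min (hcard v).1 (hcard v).2)⟩)
      (hpart _) hlevel ?_
    calc _ ≤ T * (T ^ (s - 1) * (2 * α * #U)) := by
          gcongr
          exact min_le_left _ _
      _ = 2 * α * (#U * T ^ s) := by rw [← mul_pow_sub_one (by omega : s ≠ 0) T]; ring
      _ ≤ 2 * α * (2 ^ s * M) := by gcongr
      _ = 2 ^ (s + 1) * α * M := by ring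
  case light =>
    have hM : 0 ≤ M := sum_nonneg fun u _ => by positivity
    refine sum_sq_le_two_pow_mul_rpow _ S hs (m := min (2 * α) #U) hT
      (le_min (by positivity) (Nat.cast_nonneg _)) hα
      (min_le_right _ _) (fun v hv => ⟨(hS v).1, (hS v).2.trans ?_⟩) (hpart _) hlevel ?_
    · gcongr
      exact le_min (not_lt.1 (mem_filter.1 hv).2) (hcard v).2
    calc _ ≤ 2 * α * M := by
          gcongr
          exacts [min_le_left _ _, hpart _]
      _ ≤ 2 ^ (s + 1) * α * M := by
          gcongr
          exact le_self_pow₀ one_le_two (Nat.succ_ne_zero s)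

end SimpleGraph

/-- There is an absolute constant `c > 0` (independent of `G`,
`n`, `s`, and `α`) such that for every integer `i ≥ 0`, if `n ≥ 2` then
`∑_{v ∈ V} (∑_{u ∈ Γ⁺_i(v)} d_u^{s−1})^2 ≤ c · 2^s · α^{1/s} · μ^{2 − 1/s} · log₂ n`,
where `U_i = {u : 2^{i−1} < d_u ≤ 2^i}`, `Γ⁺_i(v) = Γ⁺(v) ∩ U_i`,
`μ = ∑_{v ∈ V} d_v^s`, and `G` has degeneracy at most `α` in the sense that
every vertex subset `S` spans at most `α·|S|` edges. -/
theorem exists_const_sum_sq_level_le :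
    ∃ c : ℝ, 0 < c ∧
      ∀ (V : Type) [Fintype V] [DecidableEq V]
        (G : SimpleGraph V) [DecidableRel G.Adj]
        (s : ℕ), 1 ≤ s →
      ∀ (prec : V → V → Prop) [DecidableRel prec] [IsStrictTotalOrder V prec],
        (∀ u v : V, G.degree u < G.degree v → prec u v) →
      ∀ (α : ℝ), 1 ≤ α →
        (∀ S : Finset V,
          ((G.edgeFinset.filter (fun e => ∀ x ∈ e, x ∈ S)).card : ℝ) ≤ α * S.card) →
      ∀ (i : ℕ) (Ui : Finset V),
        (∀ u : V, u ∈ Ui ↔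
          (2 : ℝ) ^ ((i : ℝ) - 1) < (G.degree u : ℝ) ∧ (G.degree u : ℝ) ≤ 2 ^ i) →
      2 ≤ Fintype.card V →
      ∑ v : V, (∑ u ∈ ((G.neighborFinset v).filter (fun u => prec v u)) ∩ Ui,
          (G.degree u : ℝ) ^ (s - 1)) ^ 2 ≤
        c * 2 ^ s * α ^ ((1 : ℝ) / (s : ℝ)) *
          (∑ v : V, (G.degree v : ℝ) ^ s) ^ ((2 : ℝ) - 1 / (s : ℝ)) *
          Real.logb 2 (Fintype.card V) := by
  refine ⟨4, by norm_num, ?_⟩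
  intro V _ _ G _ s hs prec _ _ hmono α hα hsparse i Ui hUi hn
  have hlevel : ∀ u ∈ Ui, (2 : ℝ) ^ i ≤ 2 * G.degree u ∧ (G.degree u : ℝ) ≤ 2 ^ i := by
    intro u hu
    obtain ⟨hlow, hhigh⟩ := (hUi u).1 hu
    rw [Real.rpow_sub two_pos, Real.rpow_one, Real.rpow_natCast] at hlow
    exact ⟨by linarith, hhigh⟩
  have hlog : 1 ≤ Real.logb 2 (Fintype.card V) := by
    rw [Real.le_logb_iff_rpow_le one_lt_two (by positivity), Real.rpow_one]
    exact_mod_cast hn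
  have hexp : 0 ≤ (2 : ℝ) - 1 / s := by
    have : (1 : ℝ) / s ≤ 1 := div_le_one_of_le₀ (by exact_mod_cast hs) (Nat.cast_nonneg s)
    linarith
  calc _ ≤ 4 * 2 ^ s * α ^ ((1 : ℝ) / s) *
          (∑ u ∈ Ui, (G.degree u : ℝ) ^ s) ^ ((2 : ℝ) - 1 / s) :=
        G.sum_sq_sum_upNeighborFinset_inter_le hmono (by linarith) hsparse hs (by positivity)
          hlevel
    _ ≤ 4 * 2 ^ s * α ^ ((1 : ℝ) / s) * (∑ v, (G.degree v : ℝ) ^ s) ^ ((2 : ℝ) - 1 / s) := by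
        gcongr
        exact subset_univ Ui
    _ ≤ _ := le_mul_of_one_le_right (by positivity) hlog
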